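/- Let S be a type, s ∈ S, and φ a predicate over S. Then the (max,+) generalized weight is bounded above by the (min,max) generalized weight: λ⁺(s, φ) ≤ λᵐ(s, φ) in EReal. Consequently λ⁺(s, φ) ≤ min(0, ρ(s, φ)). -/

import Mathlib

/-- Predicates over a state space `S`:
`φ ::= ⊤ | ⊥ | (μ ≥ 0) | φ ∧ φ | φ ∨ φ` where each atom carries `μ : S → ℝ`. -/
inductive Phi (S : Type*) where
  | top : Phi S
  | bot : Phi S
  | atom (μ : S → ℝ) : Phi S
  | and (φ₁ φ₂ : Phi S) : Phi S
  | or (φ₁ φ₂ : Phi S) : Phi S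

/-- Satisfaction `s ⊨ φ` of a predicate by a state. -/
def Phi.Sat {S : Type*} (s : S) : Phi S → Prop
  | .top => True
  | .bot => False
  | .atom μ => μ s ≥ 0
  | .and φ₁ φ₂ => φ₁.Sat s ∧ φ₂.Sat s
  | .or φ₁ φ₂ => φ₁.Sat s ∨ φ₂.Sat s

/-- The `(max,+)` generalized weight `λ⁺ : S × Φ → EReal`. -/
noncomputable def lamP {S : Type*} (s : S) : Phi S → EReal
  | .top => 0
  | .bot => ⊥
  | .atom μ => if μ s ≥ 0 then 0 else ((μ s : ℝ) : EReal)
  | .and φ₁ φ₂ => lamP s φ₁ + lamP s φ₂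
  | .or φ₁ φ₂ => max (lamP s φ₁) (lamP s φ₂)

/-- The `(min,max)` generalized weight `λᵐ : S × Φ → EReal`. -/
noncomputable def lamM {S : Type*} (s : S) : Phi S → EReal
  | .top => 0
  | .bot => ⊥
  | .atom μ => if μ s ≥ 0 then 0 else ((μ s : ℝ) : EReal)
  | .and φ₁ φ₂ => min (lamM s φ₁) (lamM s φ₂)
  | .or φ₁ φ₂ => max (lamM s φ₁) (lamM s φ₂)

/-- The robustness `ρ : S × Φ → EReal`. -/
noncomputable def rob {S : Type*} (s : S) : Phi S → EReal
  | .top => ⊤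
  | .bot => ⊥
  | .atom μ => ((μ s : ℝ) : EReal)
  | .and φ₁ φ₂ => min (rob s φ₁) (rob s φ₂)
  | .or φ₁ φ₂ => max (rob s φ₁) (rob s φ₂)

/-! Every weight is nonpositive, and the sum of two nonpositive values lies below both, hence
below their minimum; so replacing `+` by `min` at conjunctions can only raise `λ⁺`. Separately,
`λᵐ` is `ρ` truncated at `0`, because `min 0 ·` distributes over `min` and `max`. -/

theorem add_le_min_of_nonpos {α : Type*} [AddZeroClass α] [LinearOrder α] [AddLeftMono α]
    [AddRightMono α] {a b : α} (ha : a ≤ 0) (hb : b ≤ 0) : a + b ≤ min a b :=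
  le_min (add_le_of_nonpos_right hb) (add_le_of_nonpos_left ha)

section Weights

variable {S : Type*} (s : S)

theorem lamP_nonpos (φ : Phi S) : lamP s φ ≤ 0 := by
  induction φ with
  | top => exact le_rfl
  | bot => exact bot_le
  | atom μ =>
    simp only [lamP]
    split_ifs with h
    · exact le_rfl
    · exact EReal.coe_nonpos.mpr (not_le.mp h).le
  | and φ₁ φ₂ ih₁ ih₂ => exact add_nonpos ih₁ ih₂
  | or φ₁ φ₂ ih₁ ih₂ => exact max_le ih₁ ih₂

theorem lamM_eq_min_zero_rob (φ : Phi S) : lamM s φ = min 0 (rob s φ) := by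
  induction φ with
  | top => simp [lamM, rob]
  | bot => simp [lamM, rob]
  | atom μ =>
    simp only [lamM, rob]
    split_ifs with h
    · exact (min_eq_left (EReal.coe_nonneg.mpr h)).symm
    · exact (min_eq_right (EReal.coe_nonpos.mpr (not_le.mp h).le)).symm
  | and φ₁ φ₂ ih₁ ih₂ =>
    rw [lamM, rob, ih₁, ih₂, min_min_min_comm, min_self]
  | or φ₁ φ₂ ih₁ ih₂ =>
    rw [lamM, rob, ih₁, ih₂, min_max_distrib_left]

end Weights

/-- **The `(max,+)` weight is bounded above by the `(min,max)` weight**, and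
consequently by the robustness truncated at zero:
`λ⁺(s, φ) ≤ λᵐ(s, φ)` and `λ⁺(s, φ) ≤ min(0, ρ(s, φ))` in `EReal`. -/
theorem lamP_le_lamM {S : Type*} (s : S) (φ : Phi S) :
    lamP s φ ≤ lamM s φ ∧ lamP s φ ≤ min 0 (rob s φ) := by
  have lamP_le : ∀ ψ : Phi S, lamP s ψ ≤ lamM s ψ := by
    intro ψ
    induction ψ with
    | top | bot | atom _ => exact le_rfl
    | and φ₁ φ₂ ih₁ ih₂ =>
      exact (add_le_min_of_nonpos (lamP_nonpos s φ₁) (lamP_nonpos s φ₂)).trans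
        (min_le_min ih₁ ih₂)
    | or φ₁ φ₂ ih₁ ih₂ => exact max_le_max ih₁ ih₂
  exact ⟨lamP_le φ, lamM_eq_min_zero_rob s φ ▸ lamP_le φ⟩
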